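/- arXiv:2202.04166 — 6 statements merged into one kernel-verified Lean document; each statement's English description precedes it below -/
import Mathlib

section
/- Let R1, R2 be nonempty finite sets and define the correlation distance by d_cor(R1,R2)^2 = 1 - |R1 ∩ R2| / sqrt(|R1|·|R2|). Then d_cor(R1,R2)^2 ≤ |R1 △ R2| / max(|R1|,|R2|), where △ denotes symmetric difference. -/
open Finset

lemma Real.sqrt_mul_le_max {x y : ℝ} (hx : 0 ≤ x) (hy : 0 ≤ y) : √(x * y) ≤ max x y := by
  rw [Real.sqrt_le_left (le_max_of_le_left hx), sq]
  exact mul_le_mul (le_max_left x y) (le_max_right x y) hy (le_max_of_le_left hx)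

namespace Finset

variable {α : Type*} [DecidableEq α]

lemma card_le_card_symmDiff_add_card_inter (s t : Finset α) :
    #s ≤ #(symmDiff s t) + #(s ∩ t) := by
  rw [← card_sdiff_add_card_inter s t]
  gcongr
  rw [symmDiff_def]
  exact le_sup_left

lemma max_card_le_card_symmDiff_add_card_inter (s t : Finset α) :
    max #s #t ≤ #(symmDiff s t) + #(s ∩ t) := by
  refine max_le (card_le_card_symmDiff_add_card_inter s t) ?_
  simpa only [symmDiff_comm, inter_comm] using card_le_card_symmDiff_add_card_inter t s

end Finset

/-- Lemma (correlation vs Hamming distance, upper part):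
for nonempty finite sets, `1 - |R1 ∩ R2|/√(|R1||R2|) ≤ |R1 △ R2| / max |R1| |R2|`. -/
theorem dcor_sq_le_symmDiff_div_max {α : Type*} [DecidableEq α]
    (R1 R2 : Finset α) (h1 : R1.Nonempty) (h2 : R2.Nonempty) :
    1 - (R1 ∩ R2).card / Real.sqrt ((R1.card : ℝ) * R2.card) ≤
      ((symmDiff R1 R2).card : ℝ) / max (R1.card : ℝ) (R2.card : ℝ) := by
  have ha : (0 : ℝ) < #R1 := by exact_mod_cast h1.card_pos
  have hb : (0 : ℝ) < #R2 := by exact_mod_cast h2.card_pos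
  have hm : (0 : ℝ) < max (#R1 : ℝ) #R2 := lt_max_of_lt_left ha
  have hmax : max (#R1 : ℝ) #R2 ≤ #(symmDiff R1 R2) + #(R1 ∩ R2) := by
    exact_mod_cast max_card_le_card_symmDiff_add_card_inter R1 R2
  calc 1 - (#(R1 ∩ R2) : ℝ) / √(#R1 * #R2)
      ≤ 1 - #(R1 ∩ R2) / max (#R1 : ℝ) #R2 := by
        gcongr
        exact Real.sqrt_mul_le_max ha.le hb.le
    _ = (max (#R1 : ℝ) #R2 - #(R1 ∩ R2)) / max (#R1 : ℝ) #R2 := by field_simp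
    _ ≤ #(symmDiff R1 R2) / max (#R1 : ℝ) #R2 := by gcongr; linarith
end

section
/- Let 0 < a ≤ 1/√e and b ≥ 0, and suppose Δ > 0 satisfies Δ ≤ a·sqrt(log(1/Δ) + b). Then Δ ≤ a·sqrt(2·max(b, log(1/a))). -/
/-- Observation: if `0 < a ≤ 1/√e`, `b ≥ 0`, `Δ > 0` and
`Δ ≤ a·√(log(1/Δ) + b)`, then `Δ ≤ a·√(2·max b (log(1/a)))`. -/
theorem delta_bound_of_self_bound (a b Δ : ℝ)
    (ha : 0 < a) (ha' : a ≤ 1 / Real.sqrt (Real.exp 1)) (hb : 0 ≤ b) (hΔ : 0 < Δ)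
    (h : Δ ≤ a * Real.sqrt (Real.log (1 / Δ) + b)) :
    Δ ≤ a * Real.sqrt (2 * max b (Real.log (1 / a))) := by
  have hexp : (1 : ℝ) / Real.sqrt (Real.exp 1) = Real.exp (-(1/2)) := by
    rw [show Real.sqrt (Real.exp 1) = Real.exp (1/2) from (Real.exp_half 1).symm,
      one_div, ← Real.exp_neg]
  have hloga : (1/2 : ℝ) ≤ Real.log (1 / a) := by
    rw [Real.log_div one_ne_zero ha.ne', Real.log_one]
    have := Real.log_le_log ha (ha'.trans_eq hexp)
    rw [Real.log_exp] at this
    linarith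
  have hmax : (1/2 : ℝ) ≤ max b (Real.log (1 / a)) := hloga.trans (le_max_right _ _)
  rcases le_total Δ a with hca | hca
  · calc Δ ≤ a * 1 := by linarith
      _ ≤ a * Real.sqrt (2 * max b (Real.log (1 / a))) := by
          apply mul_le_mul_of_nonneg_left _ ha.le
          have := Real.sqrt_le_sqrt (show (1:ℝ) ≤ 2 * max b (Real.log (1 / a)) by linarith)
          simpa using this
  · refine h.trans (mul_le_mul_of_nonneg_left ?_ ha.le)
    apply Real.sqrt_le_sqrt
    have h1 : Real.log (1 / Δ) ≤ Real.log (1 / a) :=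
      Real.log_le_log (by positivity) (by
        apply div_le_div_of_nonneg_left (by norm_num) ha hca)
    have h2 : b ≤ max b (Real.log (1 / a)) := le_max_left _ _
    have h3 : Real.log (1 / a) ≤ max b (Real.log (1 / a)) := le_max_right _ _
    linarith
end

section
/- For all real δ with 0 < δ ≤ 1/e, the integral ∫₀^δ sqrt((1/t)·log(1/t)) dt is at most 4·sqrt(δ·log(1/δ)). -/
/-!
On `(0, δ]` we have `L(t) := log (1/t) ≥ 1`. Since `(2√(t L))' = (L - 1)/√(t L)` and
`1/√(t L) ≤ 1/√t`, the integrand `√(L/t) = (L - 1)/√(t L) + 1/√(t L)` is dominated by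
the derivative of `G(t) = 2√(t L(t)) + 2√t`, which is continuous on `[0, δ]` with
`G 0 = 0`. Hence the integral is at most `G δ = 2√(δ log (1/δ)) + 2√δ ≤ 4√(δ log (1/δ))`.
-/

open Real Set MeasureTheory

theorem setIntegral_Ioc_le_sub_of_hasDerivAt {f g g' : ℝ → ℝ} {a b : ℝ} (hab : a ≤ b)
    (hg : ContinuousOn g (Icc a b)) (hderiv : ∀ x ∈ Ioo a b, HasDerivAt g (g' x) x)
    (hf : AEStronglyMeasurable f (volume.restrict (Ioc a b)))
    (hfg : ∀ x ∈ Ioo a b, ‖f x‖ ≤ g' x) :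
    ∫ x in Ioc a b, f x ≤ g b - g a := by
  have hg'int : IntegrableOn g' (Ioc a b) :=
    intervalIntegral.integrableOn_deriv_of_nonneg hg hderiv
      fun x hx => (norm_nonneg _).trans (hfg x hx)
  have hfint : IntegrableOn f (Ioc a b) :=
    hg'int.mono' hf <| ae_restrict_of_ae_eq_of_ae_restrict Ioo_ae_eq_Ioc <|
      ae_restrict_of_forall_mem measurableSet_Ioo hfg
  rw [← intervalIntegral.integral_of_le hab]
  exact intervalIntegral.integral_le_sub_of_hasDeriv_right_of_le hab hg
    (fun x hx => (hderiv x hx).hasDerivWithinAt)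
    ((integrableOn_Icc_iff_integrableOn_Ioc (μ := volume)).2 hfint)
    fun x hx => (le_norm_self _).trans (hfg x hx)

theorem hasDerivAt_sqrt_neg_mul_log {x : ℝ} (hx0 : 0 < x) (hx1 : x < 1) :
    HasDerivAt (fun t => √(-(t * log t))) ((-log x - 1) / (2 * √(-(x * log x)))) x := by
  have hpos : 0 < -(x * log x) := by nlinarith [log_neg hx0 hx1]
  refine ((hasDerivAt_mul_log hx0.ne').fun_neg.sqrt hpos.ne').congr_deriv ?_
  ring

theorem sqrt_inv_mul_le_of_one_le {x L : ℝ} (hx : 0 < x) (hL : 1 ≤ L) :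
    √(x⁻¹ * L) ≤ (L - 1) / √(x * L) + 1 / √x := by
  have hsx : 0 < √x := sqrt_pos.2 hx
  have hsL : 1 ≤ √L := one_le_sqrt.2 hL
  have hL' : √L * √L = L := mul_self_sqrt (by linarith)
  rw [sqrt_mul (inv_nonneg.2 hx.le), sqrt_mul hx.le, sqrt_inv,
    div_add_div _ _ (by positivity) hsx.ne', le_div_iff₀ (by positivity)]
  field_simp
  nlinarith

/-- Observation (Gamma-integral bound, `y = 0` case): for `0 < δ ≤ 1/e`,
`∫₀^δ √((1/t)·log(1/t)) dt ≤ 4·√(δ·log(1/δ))`. -/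
theorem integral_sqrt_log_le (δ : ℝ) (hδ0 : 0 < δ) (hδ : δ ≤ 1 / Real.exp 1) :
    ∫ t in Set.Ioc (0 : ℝ) δ, Real.sqrt ((1 / t) * Real.log (1 / t)) ≤
      4 * Real.sqrt (δ * Real.log (1 / δ)) := by
  simp only [one_div, log_inv] at hδ ⊢
  have hlog : ∀ t ∈ Ioc 0 δ, 1 ≤ -log t := fun t ht => by
    rw [le_neg, ← log_exp (-1), exp_neg]
    exact log_le_log ht.1 (ht.2.trans hδ)
  have hδ1 : δ < 1 := hδ.trans_lt (inv_lt_one_of_one_lt₀ (one_lt_exp_iff.2 one_pos))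
  calc ∫ t in Ioc 0 δ, √(t⁻¹ * -log t)
      ≤ (2 * √(-(δ * log δ)) + 2 * √δ) - (2 * √(-(0 * log 0)) + 2 * √0) := by
        refine setIntegral_Ioc_le_sub_of_hasDerivAt hδ0.le (by fun_prop)
          (fun x hx => ((hasDerivAt_sqrt_neg_mul_log hx.1 (hx.2.trans hδ1)).const_mul 2).add
            ((hasDerivAt_sqrt hx.1.ne').const_mul 2))
          (Measurable.aestronglyMeasurable (by fun_prop)) fun x hx => ?_
        rw [norm_of_nonneg (sqrt_nonneg _)]
        convert sqrt_inv_mul_le_of_one_le hx.1 (hlog x (Ioo_subset_Ioc_self hx)) using 1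
        field_simp
    _ ≤ 4 * √(δ * -log δ) := by
        have hsqrt : √δ ≤ √(δ * -log δ) :=
          sqrt_le_sqrt (le_mul_of_one_le_right hδ0.le (hlog δ ⟨hδ0, le_rfl⟩))
        simp only [zero_mul, neg_zero, sqrt_zero, mul_zero, add_zero, sub_zero, neg_mul_eq_mul_neg]
        linarith
end

section
/- For all real δ, y with 0 < δ ≤ 1/e and y > 0, the integral ∫₀^δ sqrt((1/t)·log(1/(t+y))) dt (interpreting negative values of the logarithm as contributing via its square root only where nonnegative, i.e., assuming t + y ≤ 1 on the region of integration or defining sqrt of a negative number as 0) is at most 4·sqrt(δ·log(1/max(δ,y))). -/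
/-!
For `t ∈ (0, δ]` the logarithm `log (1/(t+y))` is at most both `log (1/t)` and `log (1/y)`.
If `δ ≤ y`, the second bound leaves `∫₀^δ √(c/t) dt = 2√(cδ)` with `c = log (1/y)`.
If `y ≤ δ`, the first bound leaves `√(log (1/t) / t)`, which has no elementary primitive but on
`(0, 1/e]`, where `log (1/t) ≥ 1`, is dominated by the derivative of `2√(t log (1/t)) + 2√t`;
so its integral is at most `2√(δ log (1/δ)) + 2√δ ≤ 4√(δ log (1/δ))`.
-/

open MeasureTheory Real Set

lemma sqrt_one_div_mul_max_zero_le {t a b : ℝ} (ht : 0 < t) (hab : a ≤ b) :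
    √((1 / t) * max 0 a) ≤ √(b / t) := by
  rcases le_total a 0 with ha | ha
  · simp [max_eq_left ha]
  · rw [max_eq_right ha, one_div_mul_eq_div]
    exact sqrt_le_sqrt (div_le_div_of_nonneg_right hab ht.le)

lemma log_one_div_add_le {a b : ℝ} (ha : 0 < a) (hb : 0 ≤ b) :
    log (1 / (a + b)) ≤ log (1 / a) :=
  log_le_log (by positivity) (one_div_le_one_div_of_le ha (le_add_of_nonneg_right hb))

lemma one_le_log_one_div {t : ℝ} (ht : 0 < t) (hte : t ≤ 1 / exp 1) : 1 ≤ log (1 / t) := by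
  rw [le_log_iff_exp_le (by positivity)]
  exact (le_one_div ht (exp_pos 1)).mp hte

lemma negMulLog_eq_mul_log_one_div (t : ℝ) : negMulLog t = t * log (1 / t) := by
  rw [negMulLog, one_div, log_inv]
  ring

lemma sqrt_div_eq_mul_rpow (c : ℝ) {t : ℝ} (ht : 0 ≤ t) :
    √(c / t) = √c * t ^ (-(1 / 2) : ℝ) := by
  rw [sqrt_div' c ht, rpow_neg ht, sqrt_eq_rpow t, div_eq_mul_inv]

lemma integrableOn_sqrt_div_Ioc (c δ : ℝ) : IntegrableOn (fun t => √(c / t)) (Ioc 0 δ) :=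
  ((intervalIntegral.intervalIntegrable_rpow' (by norm_num)).const_mul √c).1.congr_fun
    (fun _ ht => (sqrt_div_eq_mul_rpow c ht.1.le).symm) measurableSet_Ioc

lemma integral_sqrt_div_Ioc (c : ℝ) {δ : ℝ} (hδ : 0 ≤ δ) :
    ∫ t in Ioc 0 δ, √(c / t) = 2 * √(c * δ) := by
  rw [setIntegral_congr_fun measurableSet_Ioc fun _ ht => sqrt_div_eq_mul_rpow c ht.1.le,
    integral_const_mul, ← intervalIntegral.integral_of_le hδ,
    integral_rpow (Or.inl (by norm_num)), zero_rpow (by norm_num), sqrt_mul' c hδ, sqrt_eq_rpow δ]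
  norm_num
  ring

noncomputable def sqrtLogPrimitive (t : ℝ) : ℝ := 2 * √(negMulLog t) + 2 * √t

noncomputable def sqrtLogMajorant (t : ℝ) : ℝ := (log (1 / t) - 1) / √(negMulLog t) + 1 / √t

lemma hasDerivAt_sqrtLogPrimitive {t : ℝ} (ht0 : 0 < t) (ht1 : t < 1) :
    HasDerivAt sqrtLogPrimitive (sqrtLogMajorant t) t := by
  have hpos : 0 < negMulLog t := by
    rw [negMulLog_eq_mul_log_one_div]
    exact mul_pos ht0 (log_pos ((one_lt_div ht0).mpr ht1))
  refine ((((hasDerivAt_negMulLog ht0.ne').sqrt hpos.ne').const_mul 2).add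
    ((hasDerivAt_sqrt ht0.ne').const_mul 2)).congr_deriv ?_
  rw [sqrtLogMajorant, one_div t, log_inv]
  field_simp

lemma sqrt_log_one_div_div_le_sqrtLogMajorant {t : ℝ} (ht : 0 < t) (hte : t ≤ 1 / exp 1) :
    √(log (1 / t) / t) ≤ sqrtLogMajorant t := by
  have hL := one_le_log_one_div ht hte
  have hr : 1 ≤ √(log (1 / t)) := one_le_sqrt.mpr hL
  have hs : 0 < √t := sqrt_pos.mpr ht
  have hr2 := sq_sqrt (zero_le_one.trans hL)
  rw [sqrtLogMajorant, negMulLog_eq_mul_log_one_div, sqrt_div' _ ht.le, sqrt_mul ht.le,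
    div_add_div _ _ (by positivity) hs.ne', div_le_div_iff₀ hs (by positivity)]
  nlinarith [mul_le_mul_of_nonneg_left hr (mul_self_nonneg √t)]

section

variable {δ : ℝ} (hδ : δ ≤ 1 / exp 1)
include hδ

lemma hasDerivAt_sqrtLogPrimitive_of_mem_Ioo {t : ℝ} (ht : t ∈ Ioo 0 δ) :
    HasDerivAt sqrtLogPrimitive (sqrtLogMajorant t) t :=
  hasDerivAt_sqrtLogPrimitive ht.1
    (ht.2.trans_le (hδ.trans ((div_le_one (exp_pos 1)).mpr (one_le_exp zero_le_one))))

lemma integrableOn_sqrtLogMajorant : IntegrableOn sqrtLogMajorant (Ioc 0 δ) :=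
  intervalIntegral.integrableOn_deriv_of_nonneg (by unfold sqrtLogPrimitive; fun_prop)
    (fun _ ht => hasDerivAt_sqrtLogPrimitive_of_mem_Ioo hδ ht)
    (fun _ ht => (sqrt_nonneg _).trans
      (sqrt_log_one_div_div_le_sqrtLogMajorant ht.1 (ht.2.le.trans hδ)))

lemma integral_sqrtLogMajorant (hδ0 : 0 ≤ δ) :
    ∫ t in Ioc 0 δ, sqrtLogMajorant t = 2 * √(δ * log (1 / δ)) + 2 * √δ := by
  rw [← intervalIntegral.integral_of_le hδ0,
    intervalIntegral.integral_eq_sub_of_hasDerivAt_of_le hδ0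
      (by unfold sqrtLogPrimitive; fun_prop)
      (fun _ ht => hasDerivAt_sqrtLogPrimitive_of_mem_Ioo hδ ht)
      ((intervalIntegrable_iff_integrableOn_Ioc_of_le hδ0).mpr (integrableOn_sqrtLogMajorant hδ))]
  simp [sqrtLogPrimitive, negMulLog_eq_mul_log_one_div]

end

/-- Observation (Gamma-integral bound, general `y`): for `0 < δ ≤ 1/e` and `y > 0`,
`∫₀^δ √(max 0 (log(1/(t+y)))/t) dt ≤ 4·√(δ·log(1/max δ y))`. -/
theorem integral_sqrt_log_shift_le (δ y : ℝ) (hδ0 : 0 < δ) (hδ : δ ≤ 1 / Real.exp 1)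
    (hy : 0 < y) :
    ∫ t in Set.Ioc (0 : ℝ) δ,
        Real.sqrt ((1 / t) * max 0 (Real.log (1 / (t + y)))) ≤
      4 * Real.sqrt (δ * Real.log (1 / max δ y)) := by
  rcases le_total y δ with hyδ | hδy
  · rw [max_eq_left hyδ]
    have hL := one_le_log_one_div hδ0 hδ
    have hsqrt : √δ ≤ √(δ * log (1 / δ)) := sqrt_le_sqrt (by nlinarith)
    calc _ ≤ ∫ t in Ioc 0 δ, sqrtLogMajorant t := by
          refine setIntegral_mono_of_nonneg (fun _ _ => sqrt_nonneg _) (fun t ht => ?_) ?_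
          · exact (sqrt_one_div_mul_max_zero_le ht.1 (log_one_div_add_le ht.1 hy.le)).trans
              (sqrt_log_one_div_div_le_sqrtLogMajorant ht.1 (ht.2.trans hδ))
          · exact integrableOn_sqrtLogMajorant hδ
      _ = 2 * √(δ * log (1 / δ)) + 2 * √δ := integral_sqrtLogMajorant hδ hδ0.le
      _ ≤ 4 * √(δ * log (1 / δ)) := by linarith
  · rw [max_eq_right hδy]
    calc _ ≤ ∫ t in Ioc 0 δ, √(log (1 / y) / t) :=
          setIntegral_mono_of_nonneg (fun _ _ => sqrt_nonneg _)
            (fun t ht => sqrt_one_div_mul_max_zero_le ht.1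
              (add_comm y t ▸ log_one_div_add_le hy ht.1.le))
            (integrableOn_sqrt_div_Ioc _ _)
      _ = 2 * √(log (1 / y) * δ) := integral_sqrt_div_Ioc _ hδ0.le
      _ ≤ 4 * √(δ * log (1 / y)) := by
          rw [mul_comm (log _) δ]; linarith [sqrt_nonneg (δ * log (1 / y))]
end

section
/- Assouad's lemma: For each v ∈ {0,1}^d let P_v be a probability distribution for a random variable Y, and define the mixtures P̄_j = 2^{-(d-1)} Σ_{v: v_j=1} P_v and P̄_{-j} = 2^{-(d-1)} Σ_{v: v_j=0} P_v. Let V ~ Uniform({0,1}^d) and, conditional on V = v, draw Y ~ P_v. Then for any estimator v̂ = v̂(Y) ∈ {0,1}^d, E[‖v̂(Y) − V‖₁] ≥ (1/2) Σ_{j=1}^d (1 − TV(P̄_j, P̄_{-j})). -/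
/-!
For each coordinate `j`, condition on `V j`: the probability that `v̂(Y) j ≠ V j` is
`2⁻¹ * (P̄_j Aᶜ + P̄_{-j} A)` with `A = {v̂ j = 1}`, and for probability measures `μ, ν` one has
`μ Aᶜ + ν A = 1 - (μ A - ν A) ≥ 1 - TV(μ, ν)`. Summing over `j` gives the bound, since the
Hamming loss is the sum of the coordinate losses.
-/

open MeasureTheory Finset ENNReal

/-- Total variation distance between two measures, as a supremum over sets. -/
noncomputable def tvDist {Ω : Type*} [MeasurableSpace Ω] (P Q : Measure Ω) : ℝ :=
  ⨆ A : Set Ω, |(P A).toReal - (Q A).toReal|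

section TotalVariation

variable {Ω : Type*} [MeasurableSpace Ω] {μ ν : Measure Ω}

lemma sub_le_tvDist [IsFiniteMeasure μ] [IsFiniteMeasure ν] (A : Set Ω) :
    μ.real A - ν.real A ≤ tvDist μ ν := by
  have hbdd : BddAbove (Set.range fun B : Set Ω => |μ.real B - ν.real B|) := by
    refine ⟨μ.real Set.univ + ν.real Set.univ, ?_⟩
    rintro _ ⟨B, rfl⟩
    calc |μ.real B - ν.real B| ≤ |μ.real B| + |ν.real B| := abs_sub _ _
      _ ≤ μ.real Set.univ + ν.real Set.univ := by
        rw [abs_of_nonneg measureReal_nonneg, abs_of_nonneg measureReal_nonneg]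
        exact add_le_add (measureReal_mono (Set.subset_univ B))
          (measureReal_mono (Set.subset_univ B))
  exact (le_abs_self _).trans (le_ciSup hbdd A)

lemma ofReal_one_sub_tvDist_le [IsProbabilityMeasure μ] [IsProbabilityMeasure ν]
    {A : Set Ω} (hA : MeasurableSet A) :
    ENNReal.ofReal (1 - tvDist μ ν) ≤ μ Aᶜ + ν A := by
  have h : 1 - tvDist μ ν ≤ μ.real Aᶜ + ν.real A := by
    rw [probReal_compl_eq_one_sub hA]
    linarith [sub_le_tvDist (μ := μ) (ν := ν) A]
  calc ENNReal.ofReal (1 - tvDist μ ν) ≤ ENNReal.ofReal (μ.real Aᶜ + ν.real A) :=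
        ENNReal.ofReal_le_ofReal h
    _ = μ Aᶜ + ν A := by
        rw [ENNReal.ofReal_add measureReal_nonneg measureReal_nonneg, ofReal_measureReal,
          ofReal_measureReal]

end TotalVariation

lemma card_filter_apply_eq {ι : Type*} [Fintype ι] [DecidableEq ι] (j : ι) (b : Bool) :
    #{v : ι → Bool | v j = b} = 2 ^ (Fintype.card ι - 1) := by
  simpa only [Fintype.piFinset_univ, card_univ, Fintype.card_bool] using
    Fintype.card_filter_piFinset_const_eq_of_mem (univ : Finset Bool) j (mem_univ b)

lemma isProbabilityMeasure_inv_card_smul_sum {Ω ι : Type*} [MeasurableSpace Ω] {s : Finset ι}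
    (hs : s.Nonempty) (P : ι → Measure Ω) [∀ i, IsProbabilityMeasure (P i)] :
    IsProbabilityMeasure ((#s : ℝ≥0∞)⁻¹ • ∑ i ∈ s, P i) := by
  constructor
  simp [Measure.finsetSum_apply, ENNReal.inv_mul_cancel, hs.ne_empty]

lemma lintegral_card_filter {X ι : Type*} [MeasurableSpace X] [Fintype ι] {μ : Measure X}
    (p : ι → X → Prop) [∀ j x, Decidable (p j x)] (hp : ∀ j, MeasurableSet {x | p j x}) :
    ∫⁻ x, (#{j | p j x} : ℝ≥0∞) ∂μ = ∑ j, μ {x | p j x} := by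
  simp_rw [card_filter, Nat.cast_sum, Nat.cast_ite, Nat.cast_one, Nat.cast_zero]
  rw [lintegral_finsetSum _ fun j _ => Measurable.ite (hp j) measurable_const measurable_const]
  refine sum_congr rfl fun j _ => ?_
  rw [← lintegral_indicator_one (hp j)]
  congr with x
  simp [Set.indicator_apply]

lemma finsetSum_dirac_prod_apply {Ω V : Type*} [MeasurableSpace Ω] [MeasurableSpace V]
    (s : Finset V) (P : V → Measure Ω) [∀ v, SFinite (P v)] {S : Set (V × Ω)}
    (hS : MeasurableSet S) :
    (∑ v ∈ s, (Measure.dirac v).prod (P v)) S = ∑ v ∈ s, P v (Prod.mk v ⁻¹' S) := by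
  simp [Measure.finsetSum_apply, Measure.dirac_prod, Measure.map_apply measurable_prodMk_left hS]

lemma lintegral_card_ne_sum_dirac_prod {Ω ι : Type*} [MeasurableSpace Ω] [Fintype ι]
    [DecidableEq ι] (P : (ι → Bool) → Measure Ω) [∀ v, SFinite (P v)] {vhat : Ω → ι → Bool}
    (hvhat : Measurable vhat) :
    ∫⁻ p : (ι → Bool) × Ω, (#{j | vhat p.2 j ≠ p.1 j} : ℝ≥0∞)
        ∂(∑ v, (Measure.dirac v).prod (P v)) =
      ∑ j, ∑ b, (∑ v with v j = b, P v) {ω | vhat ω j ≠ b} := by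
  have hmeas : ∀ j, MeasurableSet {p : (ι → Bool) × Ω | vhat p.2 j ≠ p.1 j} := fun j =>
    (measurableSet_eq_fun (by fun_prop) (by fun_prop)).compl
  rw [lintegral_card_filter _ hmeas]
  refine sum_congr rfl fun j _ => ?_
  rw [finsetSum_dirac_prod_apply _ _ (hmeas j), ← sum_fiberwise univ (fun v => v j)]
  refine sum_congr rfl fun b _ => ?_
  rw [Measure.finsetSum_apply]
  refine sum_congr rfl fun v hv => ?_
  rw [← (mem_filter.1 hv).2]
  rfl

/-- Assouad's lemma: with `V` uniform on `{0,1}^d` and `Y ~ P_V`, any estimator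
`v̂(Y)` satisfies `E‖v̂(Y) − V‖₁ ≥ (1/2)·∑_j (1 − TV(P̄_j, P̄_{-j}))`, where
`P̄_j` (resp. `P̄_{-j}`) averages `P_v` over `v` with `v_j = 1` (resp. `0`). -/
theorem assouad_lemma {Ω : Type*} [MeasurableSpace Ω] (d : ℕ) (hd : 1 ≤ d)
    (P : (Fin d → Bool) → Measure Ω) (hP : ∀ v, IsProbabilityMeasure (P v))
    (vhat : Ω → (Fin d → Bool)) (hvhat : Measurable vhat) :
    ENNReal.ofReal ((1 / 2) * ∑ j : Fin d,
        (1 - tvDist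
          ((2 ^ (d - 1) : ℝ≥0∞)⁻¹ •
            ∑ v ∈ Finset.univ.filter (fun v : Fin d → Bool => v j = true), P v)
          ((2 ^ (d - 1) : ℝ≥0∞)⁻¹ •
            ∑ v ∈ Finset.univ.filter (fun v : Fin d → Bool => v j = false), P v))) ≤
      ∫⁻ p : (Fin d → Bool) × Ω,
          ((Finset.univ.filter (fun j : Fin d => vhat p.2 j ≠ p.1 j)).card : ℝ≥0∞)
        ∂((2 ^ d : ℝ≥0∞)⁻¹ •
            ∑ v : Fin d → Bool, (Measure.dirac v).prod (P v)) := by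
  have hmix (j : Fin d) (b : Bool) :
      IsProbabilityMeasure ((2 ^ (d - 1) : ℝ≥0∞)⁻¹ • ∑ v with v j = b, P v) := by
    have h := isProbabilityMeasure_inv_card_smul_sum (s := {v : Fin d → Bool | v j = b})
      ⟨fun _ => b, mem_filter.2 ⟨mem_univ _, rfl⟩⟩ P
    rwa [card_filter_apply_eq, Fintype.card_fin, Nat.cast_pow, Nat.cast_ofNat] at h
  have hcompl (j : Fin d) : {ω | vhat ω j ≠ true} = {ω | vhat ω j ≠ false}ᶜ := by
    ext; simp
  have hinv : (2 ^ d : ℝ≥0∞)⁻¹ = 2⁻¹ * (2 ^ (d - 1))⁻¹ := by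
    rw [← ENNReal.mul_inv (by simp) (by simp), ← pow_succ', Nat.sub_add_cancel hd]
  rw [lintegral_smul_measure, lintegral_card_ne_sum_dirac_prod P hvhat]
  calc _ ≤ ∑ j : Fin d, 2⁻¹ * ENNReal.ofReal (1 - tvDist
          ((2 ^ (d - 1) : ℝ≥0∞)⁻¹ • ∑ v with v j = true, P v)
          ((2 ^ (d - 1) : ℝ≥0∞)⁻¹ • ∑ v with v j = false, P v)) := by
        rw [ENNReal.ofReal_mul (by norm_num), one_div, ENNReal.ofReal_inv_of_pos two_pos,
          ENNReal.ofReal_ofNat, ← mul_sum]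
        gcongr
        exact le_sum_of_subadditive _ ENNReal.ofReal_zero.le
          (fun _ _ => ENNReal.ofReal_add_le) _ _
    _ ≤ ∑ j : Fin d, 2⁻¹ * (((2 ^ (d - 1) : ℝ≥0∞)⁻¹ • ∑ v with v j = true, P v)
          {ω | vhat ω j ≠ true} + ((2 ^ (d - 1) : ℝ≥0∞)⁻¹ • ∑ v with v j = false, P v)
          {ω | vhat ω j ≠ false}) := by
        gcongr with j
        rw [hcompl]
        exact ofReal_one_sub_tvDist_le
          (measurableSet_eq_fun (by fun_prop) measurable_const).compl
    _ = _ := by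
        simp only [Fintype.sum_bool, Measure.smul_apply, smul_eq_mul, hinv, mul_sum, mul_add,
          mul_assoc]
end

section
/- Let π₁,...,π_N ∈ [0,1] be p-values such that under the null for index l, P(π_l ≤ u) ≤ u for all u ∈ [0,1], with the p-values mutually independent, and let 𝒩 ⊆ {1,...,N} be the set of true nulls. Then the Benjamini–Hochberg procedure at level α (rejecting the hypotheses corresponding to the k_max smallest p-values, where k_max = max{l : π_{(l)} ≤ lα/N}, and rejecting nothing if the set is empty) has false discovery rate E[|rejected ∩ 𝒩| / max(|rejected|, 1)] ≤ α·|𝒩|/N ≤ α. -/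
open MeasureTheory Finset ENNReal

/-- The Benjamini–Hochberg rejection threshold index
`k_max(ω) = max{m ≤ N : #{l : π_l(ω) ≤ m·α/N} ≥ m}`. -/
noncomputable def bhKmax {Ω : Type*} (N : ℕ) (π : Fin N → Ω → ℝ) (α : ℝ) (ω : Ω) : ℕ :=
  sSup {m : ℕ | m ≤ N ∧
    m ≤ (Finset.univ.filter (fun l : Fin N => π l ω ≤ (m : ℝ) * α / N)).card}

section Helpers
variable {Ω : Type*} {N : ℕ} {π : Fin N → Ω → ℝ} {α : ℝ} {ω : Ω}

noncomputable def bhC (N : ℕ) (π : Fin N → Ω → ℝ) (α : ℝ) (ω : Ω) (m : ℕ) : ℕ :=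
  (Finset.univ.filter (fun l : Fin N => π l ω ≤ (m : ℝ) * α / N)).card

def bhS (N : ℕ) (π : Fin N → Ω → ℝ) (α : ℝ) (ω : Ω) : Set ℕ :=
  {m : ℕ | m ≤ N ∧ m ≤ bhC N π α ω m}

lemma bhS_zero : 0 ∈ bhS N π α ω := ⟨Nat.zero_le _, Nat.zero_le _⟩
lemma bhS_bdd : BddAbove (bhS N π α ω) := ⟨N, fun _ hm => hm.1⟩
lemma bhKmax_mem : bhKmax N π α ω ∈ bhS N π α ω := Nat.sSup_mem ⟨0, bhS_zero⟩ bhS_bdd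
lemma le_bhKmax {m : ℕ} (h : m ∈ bhS N π α ω) : m ≤ bhKmax N π α ω := le_csSup bhS_bdd h
lemma bhKmax_le {k : ℕ} (h : ∀ m ∈ bhS N π α ω, m ≤ k) : bhKmax N π α ω ≤ k :=
  csSup_le ⟨0, bhS_zero⟩ h

lemma bh_thr_nonneg (hα : 0 ≤ α) (m : ℕ) : (0:ℝ) ≤ (m : ℝ) * α / N := by positivity

-- congruence: bhKmax only depends on the values
lemma bhKmax_congr {Ω' : Type*} {q : Fin N → Ω' → ℝ} {ω' : Ω'}
    (h : ∀ j, π j ω = q j ω') : bhKmax N π α ω = bhKmax N q α ω' := by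
  unfold bhKmax
  simp only [h]

-- update: the filter sets agree when π l ω is below the threshold
lemma bh_filter_update_eq (hα : 0 ≤ α) {l : Fin N} {m : ℕ}
    (hkl : π l ω ≤ (m : ℝ) * α / N) :
    bhC N (Function.update π l fun _ => (0:ℝ)) α ω m = bhC N π α ω m := by
  unfold bhC
  congr 1
  apply Finset.filter_congr
  intro j _
  rcases eq_or_ne j l with rfl | hj
  · simp only [Function.update_self]
    exact iff_of_true (bh_thr_nonneg hα m) hkl
  · rw [Function.update_of_ne hj]

lemma bhC_le_update (hα : 0 ≤ α) {l : Fin N} {m : ℕ} :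
    bhC N π α ω m ≤ bhC N (Function.update π l fun _ => (0:ℝ)) α ω m := by
  apply Finset.card_le_card
  intro j hj
  simp only [Finset.mem_filter, Finset.mem_univ, true_and] at hj ⊢
  rcases eq_or_ne j l with rfl | hjl
  · simpa [Function.update_self] using bh_thr_nonneg hα m
  · rwa [Function.update_of_ne hjl]

lemma bhKmax_le_update (hα : 0 ≤ α) {l : Fin N} :
    bhKmax N π α ω ≤ bhKmax N (Function.update π l fun _ => (0:ℝ)) α ω := by
  have hm := bhKmax_mem (N := N) (π := π) (α := α) (ω := ω)
  exact le_bhKmax ⟨hm.1, hm.2.trans (bhC_le_update hα)⟩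

/-- Leave-one-out identity: on the event `π l ω ≤ k α / N`, the BH threshold
index with `π l` replaced by `0` agrees with the original one. -/
lemma bhKmax_update_iff (hα : 0 ≤ α) {l : Fin N} {k : ℕ}
    (hkl : π l ω ≤ (k : ℝ) * α / N) :
    bhKmax N π α ω = k ↔ bhKmax N (Function.update π l fun _ => (0:ℝ)) α ω = k := by
  set q := Function.update π l fun _ => (0:ℝ) with hq
  constructor
  · intro h
    have h1 : k ≤ bhKmax N q α ω := h ▸ bhKmax_le_update hα
    refine le_antisymm ?_ h1
    have hm := bhKmax_mem (N := N) (π := q) (α := α) (ω := ω)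
    have hkl' : π l ω ≤ (bhKmax N q α ω : ℝ) * α / N := by
      calc π l ω ≤ (k : ℝ) * α / N := hkl
        _ ≤ _ := by
            have : (k:ℝ) ≤ (bhKmax N q α ω : ℝ) := by exact_mod_cast h1
            gcongr
    have hc : bhC N π α ω (bhKmax N q α ω) = bhC N q α ω (bhKmax N q α ω) :=
      (bh_filter_update_eq hα hkl').symm
    have : bhKmax N q α ω ∈ bhS N π α ω := ⟨hm.1, hc ▸ hm.2⟩
    exact h ▸ le_bhKmax this
  · intro h
    have hub : bhKmax N π α ω ≤ k := h ▸ bhKmax_le_update hα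
    refine le_antisymm hub ?_
    have hm := bhKmax_mem (N := N) (π := q) (α := α) (ω := ω)
    rw [h] at hm
    have hc : bhC N π α ω k = bhC N q α ω k := (bh_filter_update_eq hα hkl).symm
    exact le_bhKmax ⟨hm.1, hc ▸ hm.2⟩

/-- characterization of `bhKmax = k` for measurability -/
lemma bhKmax_eq_iff {k : ℕ} (hk : k ≤ N) :
    bhKmax N π α ω = k ↔
      (k = 0 ∨ k ≤ bhC N π α ω k) ∧ ∀ m, k < m → m ≤ N → bhC N π α ω m < m := by
  constructor
  · intro h
    refine ⟨Or.inr (h ▸ (bhKmax_mem (N := N) (π := π) (α := α) (ω := ω)).2), ?_⟩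
    intro m hkm hmN
    by_contra hc
    push_neg at hc
    have := le_bhKmax (N := N) (π := π) (α := α) (ω := ω) ⟨hmN, hc⟩
    omega
  · rintro ⟨h1, h2⟩
    have hub : bhKmax N π α ω ≤ k := by
      apply bhKmax_le
      intro m hm
      by_contra hc
      push_neg at hc
      exact absurd hm.2 (Nat.not_le_of_lt (h2 m hc hm.1))
    rcases h1 with rfl | h1
    · omega
    · exact le_antisymm hub (le_bhKmax ⟨hk, h1⟩)

lemma measurable_bhC {Ω' : Type*} [MeasurableSpace Ω'] {p : Fin N → Ω' → ℝ}
    (hp : ∀ l, Measurable (p l)) (m : ℕ) :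
    Measurable fun x => bhC N p α x m := by
  have : ∀ x, bhC N p α x m = ∑ l : Fin N, if p l x ≤ (m : ℝ) * α / N then 1 else 0 := by
    intro x; rw [bhC, Finset.card_filter]
  simp only [this]
  exact Finset.measurable_sum _ fun l _ =>
    Measurable.ite (measurableSet_le (hp l) measurable_const)
      measurable_const measurable_const

lemma measurable_bhKmax {Ω' : Type*} [MeasurableSpace Ω'] {p : Fin N → Ω' → ℝ}
    (hp : ∀ l, Measurable (p l)) :
    Measurable fun x => bhKmax N p α x := by
  apply measurable_to_countable'
  intro k
  by_cases hk : k ≤ N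
  · have hset : (fun x => bhKmax N p α x) ⁻¹' {k} =
        ({x | k = 0 ∨ k ≤ bhC N p α x k} ∩
          ⋂ m ∈ Finset.Ioc k N, {x | bhC N p α x m < m}) := by
      ext x
      simp only [Set.mem_preimage, Set.mem_singleton_iff, Set.mem_inter_iff,
        Set.mem_setOf_eq, Set.mem_iInter, Finset.mem_Ioc]
      rw [bhKmax_eq_iff hk]
      constructor
      · rintro ⟨h1, h2⟩; exact ⟨h1, fun m hm => h2 m hm.1 hm.2⟩
      · rintro ⟨h1, h2⟩; exact ⟨h1, fun m h h' => h2 m ⟨h, h'⟩⟩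
    rw [hset]
    refine MeasurableSet.inter ?_ ?_
    · rcases eq_or_ne k 0 with rfl | hk0
      · simp
      · have : {x | k = 0 ∨ k ≤ bhC N p α x k} = {x | k ≤ bhC N p α x k} := by
          ext x; simp [hk0]
        rw [this]
        exact (measurable_bhC hp k) measurableSet_Ici
    · exact MeasurableSet.biInter (Finset.Ioc k N).countable_toSet
        fun m _ => (measurable_bhC hp m) measurableSet_Iio
  · have : (fun x => bhKmax N p α x) ⁻¹' {k} = ∅ := by
      ext x
      simp only [Set.mem_preimage, Set.mem_singleton_iff, Set.mem_empty_iff_false,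
        iff_false]
      intro h
      exact hk (h ▸ (bhKmax_mem (N := N) (π := p) (α := α) (ω := x)).1)
    simp [this]

lemma bh_thr_mono (hα : 0 ≤ α) {m m' : ℕ} (h : m ≤ m') :
    (m : ℝ) * α / N ≤ (m' : ℝ) * α / N := by
  have : (m:ℝ) ≤ m' := by exact_mod_cast h
  gcongr

lemma bhC_mono (hα : 0 ≤ α) {m m' : ℕ} (h : m ≤ m') :
    bhC N π α ω m ≤ bhC N π α ω m' := by
  apply Finset.card_le_card
  intro l hl
  simp only [Finset.mem_filter, Finset.mem_univ, true_and] at hl ⊢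
  exact hl.trans (bh_thr_mono hα h)

/-- The number of rejections equals `k_max`. -/
lemma bhC_kmax (hN : 1 ≤ N) (hα : 0 ≤ α) :
    bhC N π α ω (bhKmax N π α ω) = bhKmax N π α ω := by
  set k := bhKmax N π α ω with hk
  have hmem := bhKmax_mem (N := N) (π := π) (α := α) (ω := ω)
  rw [← hk] at hmem
  refine le_antisymm ?_ hmem.2
  by_contra hlt
  push_neg at hlt
  rcases lt_or_eq_of_le hmem.1 with hkN | hkN
  · have : k + 1 ∈ bhS N π α ω :=
      ⟨hkN, le_trans (Nat.succ_le_of_lt hlt) (bhC_mono hα (Nat.le_succ k))⟩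
    exact absurd (le_bhKmax this) (by omega)
  · have : bhC N π α ω k ≤ N := by
      have := Finset.card_filter_le (Finset.univ : Finset (Fin N))
        (fun l : Fin N => π l ω ≤ (k : ℝ) * α / N)
      simpa [bhC] using this
    omega


end Helpers

section Indep
open ProbabilityTheory

lemma bh_indep {Ω : Type*} [MeasurableSpace Ω] {μ : Measure Ω} {N : ℕ}
    {π : Fin N → Ω → ℝ} {α : ℝ}
    (hmeas : ∀ l, Measurable (π l))
    (hindep : iIndepFun π μ) (l : Fin N) :
    IndepFun (π l)
      (fun ω => bhKmax N (Function.update π l fun _ => (0:ℝ)) α ω) μ := by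
  classical
  have h := hindep.indepFun_finset {l} ({l}ᶜ) disjoint_compl_right hmeas
  set pfam : Fin N → ((({l}ᶜ : Finset (Fin N))) → ℝ) → ℝ := fun j y =>
    if hj : j = l then 0 else y ⟨j, Finset.mem_compl.mpr (by simp [hj])⟩ with hpfam
  have mG : Measurable fun x => bhKmax N pfam α x := by
    apply measurable_bhKmax
    intro j
    rcases eq_or_ne j l with rfl | hj
    · have : pfam j = fun _ => 0 := by funext y; simp [hpfam]
      rw [this]; exact measurable_const
    · have : pfam j = fun y => y ⟨j, Finset.mem_compl.mpr (by simp [hj])⟩ := by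
        funext y; simp [hpfam, hj]
      rw [this]; exact measurable_pi_apply _
  have mφ : Measurable fun x : ((({l} : Finset (Fin N))) → ℝ) =>
      x ⟨l, Finset.mem_singleton_self l⟩ := measurable_pi_apply _
  have h2 := h.comp mφ mG
  have e2 : ((fun x => bhKmax N pfam α x) ∘ fun ω (i : ({l}ᶜ : Finset (Fin N))) => π i ω)
      = fun ω => bhKmax N (Function.update π l fun _ => (0:ℝ)) α ω := by
    funext ω
    apply bhKmax_congr
    intro j
    rcases eq_or_ne j l with rfl | hj
    · simp [hpfam, Function.update_self]
    · simp [hpfam, hj, Function.update_of_ne hj]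
  have e1 : ((fun x : ((({l} : Finset (Fin N))) → ℝ) => x ⟨l, Finset.mem_singleton_self l⟩)
      ∘ fun ω (i : ({l} : Finset (Fin N))) => π i ω) = π l := rfl
  rw [e1, e2] at h2
  exact h2

end Indep

/-- The set of hypotheses the BH procedure rejects: those with
`π_l ≤ k_max·α/N`. -/
noncomputable def bhRejected {Ω : Type*} (N : ℕ) (π : Fin N → Ω → ℝ) (α : ℝ)
    (ω : Ω) : Finset (Fin N) :=
  Finset.univ.filter (fun l : Fin N => π l ω ≤ (bhKmax N π α ω : ℝ) * α / N)

/-- The Benjamini–Hochberg FDR control theorem: with independent p-values whose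
null members are super-uniform, `FDR ≤ α·N₀/N ≤ α` where `N₀` is the number of
true nulls. -/
theorem benjamini_hochberg_fdr_control {Ω : Type*} [MeasurableSpace Ω]
    (μ : Measure Ω) [IsProbabilityMeasure μ]
    (N : ℕ) (hN : 1 ≤ N) (α : ℝ) (hα : 0 < α) (hα1 : α < 1)
    (π : Fin N → Ω → ℝ) (hmeas : ∀ l, Measurable (π l))
    (hrange : ∀ l ω, π l ω ∈ Set.Icc (0 : ℝ) 1)
    (hindep : ProbabilityTheory.iIndepFun π μ)
    (𝒩 : Finset (Fin N))
    (hnull : ∀ l ∈ 𝒩, ∀ u ∈ Set.Icc (0 : ℝ) 1,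
      μ {ω | π l ω ≤ u} ≤ ENNReal.ofReal u) :
    (∫ ω, ((bhRejected N π α ω ∩ 𝒩).card : ℝ) /
          max ((bhRejected N π α ω).card : ℝ) 1 ∂μ) ≤ α * 𝒩.card / N ∧
      α * 𝒩.card / N ≤ α := by
  classical
  have hNpos : (0:ℝ) < N := by exact_mod_cast hN
  have hcard𝒩 : (𝒩.card : ℝ) ≤ N := by
    have := Finset.card_le_card (Finset.subset_univ 𝒩)
    simp only [Finset.card_univ, Fintype.card_fin] at this
    exact_mod_cast this
  constructor
  case right =>
    rw [div_le_iff₀ hNpos]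
    calc α * 𝒩.card ≤ α * N := by
          exact mul_le_mul_of_nonneg_left hcard𝒩 hα.le
      _ = α * N := rfl
  case left =>
  set KL : Fin N → Ω → ℕ :=
    fun l ω => bhKmax N (Function.update π l fun _ => (0:ℝ)) α ω with hKL
  set A : Fin N → ℕ → Set Ω := fun l k =>
    (π l) ⁻¹' Set.Iic ((k:ℝ) * α / N) ∩ (KL l) ⁻¹' {k} with hA
  have hmeasKL : ∀ l, Measurable (KL l) := by
    intro l
    apply measurable_bhKmax
    intro j
    rcases eq_or_ne j l with rfl | hj
    · rw [Function.update_self]; exact measurable_const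
    · rw [Function.update_of_ne hj]; exact hmeas j
  have hAmeas : ∀ l k, MeasurableSet (A l k) := fun l k =>
    ((hmeas l) measurableSet_Iic).inter ((hmeasKL l) (measurableSet_singleton k))
  have hpoint : ∀ ω, ((bhRejected N π α ω ∩ 𝒩).card : ℝ) /
      max ((bhRejected N π α ω).card : ℝ) 1
      = ∑ l ∈ 𝒩, ∑ k ∈ Finset.Icc 1 N, (A l k).indicator (fun _ => (k:ℝ)⁻¹) ω := by
    intro ω
    have hcardR : (bhRejected N π α ω).card = bhKmax N π α ω := bhC_kmax hN hα.le
    set k₀ := bhKmax N π α ω with hk₀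
    have hk₀N : k₀ ≤ N := (bhKmax_mem (N := N) (π := π) (α := α) (ω := ω)).1
    have hiff : ∀ l k, ω ∈ A l k ↔ (π l ω ≤ (k:ℝ)*α/N ∧ k₀ = k) := by
      intro l k
      simp only [hA, Set.mem_inter_iff, Set.mem_preimage, Set.mem_Iic,
        Set.mem_singleton_iff, hKL]
      constructor
      · rintro ⟨h1, h2⟩; exact ⟨h1, (bhKmax_update_iff hα.le h1).mpr h2⟩
      · rintro ⟨h1, h2⟩; exact ⟨h1, (bhKmax_update_iff hα.le h1).mp h2⟩
    have hind : ∀ l k, (A l k).indicator (fun _ => (k:ℝ)⁻¹) ω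
        = if (π l ω ≤ (k:ℝ)*α/N ∧ k₀ = k) then (k:ℝ)⁻¹ else 0 := by
      intro l k
      rw [Set.indicator_apply]
      exact if_congr (hiff l k) rfl rfl
    simp only [hind]
    rcases Nat.eq_zero_or_pos k₀ with hk0 | hk0
    · have hRempty : bhRejected N π α ω = ∅ :=
        Finset.card_eq_zero.mp (by rw [hcardR]; exact hk0)
      rw [hRempty]
      simp only [Finset.empty_inter, Finset.card_empty, Nat.cast_zero, zero_div]
      symm
      apply Finset.sum_eq_zero
      intro l _
      apply Finset.sum_eq_zero
      intro k hk
      rw [Finset.mem_Icc] at hk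
      rw [if_neg]
      rintro ⟨-, h2⟩
      omega
    · have hmax : max ((bhRejected N π α ω).card : ℝ) 1 = (k₀ : ℝ) := by
        rw [hcardR]
        exact max_eq_left (by exact_mod_cast hk0)
      have hRinter : bhRejected N π α ω ∩ 𝒩
          = 𝒩.filter fun j => π j ω ≤ (k₀:ℝ)*α/N := by
        ext j
        simp [bhRejected, Finset.mem_inter, Finset.mem_filter, ← hk₀, and_comm]
      rw [hmax, hRinter, Finset.card_filter]
      push_cast
      rw [Finset.sum_div]
      apply Finset.sum_congr rfl
      intro l _
      have hsum : (∑ k ∈ Finset.Icc 1 N,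
            if (π l ω ≤ (k:ℝ)*α/N ∧ k₀ = k) then (k:ℝ)⁻¹ else 0)
          = if π l ω ≤ (k₀:ℝ)*α/N then (k₀:ℝ)⁻¹ else 0 := by
        rw [Finset.sum_eq_single k₀]
        · exact if_congr (by simp) rfl rfl
        · intro b _ hb; exact if_neg (fun hx => hb hx.2.symm)
        · intro h; exact absurd (Finset.mem_Icc.mpr ⟨hk0, hk₀N⟩) h
      rw [hsum]
      split_ifs with h <;> simp
  calc (∫ ω, ((bhRejected N π α ω ∩ 𝒩).card : ℝ) /
          max ((bhRejected N π α ω).card : ℝ) 1 ∂μ)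
      = ∫ ω, ∑ l ∈ 𝒩, ∑ k ∈ Finset.Icc 1 N,
          (A l k).indicator (fun _ => (k:ℝ)⁻¹) ω ∂μ := by
        simp only [hpoint]
    _ = ∑ l ∈ 𝒩, ∑ k ∈ Finset.Icc 1 N, (μ (A l k)).toReal * (k:ℝ)⁻¹ := by
        rw [integral_finset_sum]
        · apply Finset.sum_congr rfl; intro l _
          rw [integral_finset_sum]
          · apply Finset.sum_congr rfl; intro k _
            rw [integral_indicator_const _ (hAmeas l k)]
            simp [smul_eq_mul, Measure.real]
          · intro k _; exact (integrable_const _).indicator (hAmeas l k)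
        · intro l _
          exact integrable_finset_sum _ fun k _ => (integrable_const _).indicator (hAmeas l k)
    _ ≤ ∑ l ∈ 𝒩, ∑ k ∈ Finset.Icc 1 N, (α / N) * (μ ((KL l) ⁻¹' {k})).toReal := by
        apply Finset.sum_le_sum; intro l hl
        apply Finset.sum_le_sum; intro k hk
        rw [Finset.mem_Icc] at hk
        have hprod : μ (A l k)
            = μ ((π l) ⁻¹' Set.Iic ((k:ℝ)*α/N)) * μ ((KL l) ⁻¹' {k}) :=
          (bh_indep hmeas hindep l).measure_inter_preimage_eq_mul
            _ _ measurableSet_Iic (measurableSet_singleton k)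
        have hthr1 : (k:ℝ)*α/N ≤ 1 := by
          have h1 : (k:ℝ)*α/N ≤ (N:ℝ)*α/N := by
            have : (k:ℝ) ≤ N := by exact_mod_cast hk.2
            gcongr
          have h2 : (N:ℝ)*α/N = α := by field_simp
          linarith [hα1.le]
        have hnl : μ ((π l) ⁻¹' Set.Iic ((k:ℝ)*α/N))
            ≤ ENNReal.ofReal ((k:ℝ)*α/N) :=
          hnull l hl _ ⟨by positivity, hthr1⟩
        have hle : (μ (A l k)).toReal
            ≤ ((k:ℝ)*α/N) * (μ ((KL l) ⁻¹' {k})).toReal := by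
          rw [hprod, ENNReal.toReal_mul]
          apply mul_le_mul_of_nonneg_right _ ENNReal.toReal_nonneg
          exact ENNReal.toReal_le_of_le_ofReal (by positivity) hnl
        have hkne : (k:ℝ) ≠ 0 := Nat.cast_ne_zero.mpr (by omega)
        calc (μ (A l k)).toReal * (k:ℝ)⁻¹
            ≤ ((k:ℝ)*α/N) * (μ ((KL l) ⁻¹' {k})).toReal * (k:ℝ)⁻¹ :=
              mul_le_mul_of_nonneg_right hle (by positivity)
          _ = (α / N) * (μ ((KL l) ⁻¹' {k})).toReal := by
              field_simp
    _ ≤ ∑ l ∈ 𝒩, α / N := by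
        apply Finset.sum_le_sum; intro l _
        rw [← Finset.mul_sum]
        apply mul_le_of_le_one_right (by positivity)
        have hdisj : (Finset.Icc 1 N : Set ℕ).PairwiseDisjoint
            fun k => (KL l) ⁻¹' {k} := by
          intro i _ j _ hij
          apply Set.disjoint_left.mpr
          intro ω h1 h2
          simp only [Set.mem_preimage, Set.mem_singleton_iff] at h1 h2
          exact hij (h1.symm.trans h2)
        have hsum : ∑ k ∈ Finset.Icc 1 N, μ ((KL l) ⁻¹' {k}) ≤ 1 := by
          rw [← measure_biUnion_finset hdisj
            fun k _ => (hmeasKL l) (measurableSet_singleton k)]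
          exact (measure_mono (Set.subset_univ _)).trans_eq measure_univ
        calc ∑ k ∈ Finset.Icc 1 N, (μ ((KL l) ⁻¹' {k})).toReal
            = (∑ k ∈ Finset.Icc 1 N, μ ((KL l) ⁻¹' {k})).toReal :=
              (ENNReal.toReal_sum fun k _ => measure_ne_top μ _).symm
          _ ≤ (1:ℝ≥0∞).toReal := ENNReal.toReal_mono one_ne_top hsum
          _ = 1 := ENNReal.toReal_one
    _ = α * 𝒩.card / N := by
        rw [Finset.sum_const, nsmul_eq_mul]; ring
end
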